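/- Let h_0 ∈ ℂ^K, x_0 ∈ ℂ^N with ‖h_0‖ = ‖x_0‖ = √d_0 > 0, let M ∈ ℂ^{K×N} satisfy ‖M − h_0x_0*‖ ≤ ξ·d_0 (operator norm) for some 0 ≤ ξ ≤ 1/10, and let d = ‖M‖. Suppose ĥ ∈ ℂ^K and x̂ ∈ ℂ^N are unit vectors such that ‖M − d·ĥx̂*‖ ≤ ‖M − Z‖ for every Z ∈ ℂ^{K×N} of rank at most one. Then: (i) |d − d_0| ≤ ξ·d_0; (ii) ‖d·ĥx̂* − h_0x_0*‖ ≤ 2ξ·d_0; and (iii) ‖(I_K − h_0h_0*/d_0)·ĥ‖ ≤ 2ξ. -/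

import Mathlib

noncomputable section
open Finset ComplexConjugate

namespace RGD

/-- Squared Euclidean norm of a complex vector. -/
def vnormSq {n : ℕ} (v : Fin n → ℂ) : ℝ := ∑ j, ‖v j‖ ^ 2

/-- Euclidean norm of a complex vector. -/
def vnorm {n : ℕ} (v : Fin n → ℂ) : ℝ := Real.sqrt (vnormSq v)

/-- Inner product, conjugate-linear in the first argument. -/
def vinner {n : ℕ} (u v : Fin n → ℂ) : ℂ := ∑ j, conj (u j) * v j

/-- Squared Frobenius norm of a matrix. -/
def frobSq {K N : ℕ} (Z : Matrix (Fin K) (Fin N) ℂ) : ℝ := ∑ k, ∑ j, ‖Z k j‖ ^ 2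

/-- Frobenius norm of a matrix. -/
def frob {K N : ℕ} (Z : Matrix (Fin K) (Fin N) ℂ) : ℝ := Real.sqrt (frobSq Z)

/-- Frobenius inner product `⟨U,V⟩ = Tr(U*V)`, conjugate-linear in the first argument. -/
def finner {K N : ℕ} (U V : Matrix (Fin K) (Fin N) ℂ) : ℂ := ∑ k, ∑ j, conj (U k j) * V k j

/-- Spectral (operator) norm of a matrix: sup of `‖Zv‖` over the closed unit ball. -/
def opNorm {K N : ℕ} (Z : Matrix (Fin K) (Fin N) ℂ) : ℝ :=
  sSup {r : ℝ | ∃ v : Fin N → ℂ, vnorm v ≤ 1 ∧ r = vnorm (Z.mulVec v)}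

/-- Squared Frobenius norm of a block-diagonal matrix, given by its diagonal blocks. -/
def famFrobSq {K N s : ℕ} (Z : Fin s → Matrix (Fin K) (Fin N) ℂ) : ℝ := ∑ i, frobSq (Z i)

/-- Frobenius norm of a block-diagonal matrix, given by its diagonal blocks. -/
def famFrob {K N s : ℕ} (Z : Fin s → Matrix (Fin K) (Fin N) ℂ) : ℝ := Real.sqrt (famFrobSq Z)

/-- The rank-one matrix `u v*`. -/
def rankOne {K N : ℕ} (u : Fin K → ℂ) (v : Fin N → ℂ) : Matrix (Fin K) (Fin N) ℂ :=
  Matrix.of fun k j => u k * conj (v j)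

/-- `ℋ(h,x)`: block-diagonal matrix with `i`-th block `hᵢ xᵢ*`. -/
def Hmap {K N s : ℕ} (h : Fin s → Fin K → ℂ) (x : Fin s → Fin N → ℂ) :
    Fin s → Matrix (Fin K) (Fin N) ℂ := fun i => rankOne (h i) (x i)

/-- `𝒜ᵢ(Z) = (bₗ* Z aₗ)ₗ`. -/
def calAi {K N L : ℕ} (b : Fin L → Fin K → ℂ) (a : Fin L → Fin N → ℂ)
    (Z : Matrix (Fin K) (Fin N) ℂ) : Fin L → ℂ :=
  fun l => vinner (b l) (Z.mulVec (a l))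

/-- `𝒜(Z) = Σᵢ 𝒜ᵢ(Zᵢ)` on block-diagonal matrices. -/
def calA {K N L s : ℕ} (b : Fin L → Fin K → ℂ) (a : Fin s → Fin L → Fin N → ℂ)
    (Z : Fin s → Matrix (Fin K) (Fin N) ℂ) : Fin L → ℂ :=
  fun l => ∑ i, calAi b (a i) (Z i) l

/-- `𝒜ᵢ*(z) = Σₗ zₗ bₗ aₗ*`. -/
def calAdj {K N L : ℕ} (b : Fin L → Fin K → ℂ) (a : Fin L → Fin N → ℂ)
    (z : Fin L → ℂ) : Matrix (Fin K) (Fin N) ℂ :=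
  Matrix.of fun k j => ∑ l, z l * b l k * conj (a l j)

/-- `‖𝒜*(e)‖ = maxᵢ ‖𝒜ᵢ*(e)‖` (operator norms). -/
def AadjNorm {K N L s : ℕ} (b : Fin L → Fin K → ℂ) (a : Fin s → Fin L → Fin N → ℂ)
    (e : Fin L → ℂ) : ℝ :=
  ⨆ i : Fin s, opNorm (calAdj b (a i) e)

/-- `B*B = I_K`, expressed in terms of the columns `bₗ` of `B*`. -/
def BtBeqI {K L : ℕ} (b : Fin L → Fin K → ℂ) : Prop :=
  ∀ k k' : Fin K, (∑ l, b l k * conj (b l k')) = if k = k' then (1 : ℂ) else 0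

/-- `μ ≥ μ_h`, i.e. `√L ‖B h_{i0}‖_∞ ≤ μ ‖h_{i0}‖` for all `i`. -/
def muhLe {K L s : ℕ} (b : Fin L → Fin K → ℂ) (h0 : Fin s → Fin K → ℂ) (μ : ℝ) : Prop :=
  ∀ i l, Real.sqrt L * ‖vinner (b l) (h0 i)‖ ≤ μ * vnorm (h0 i)

/-- `d₀ = √(Σᵢ d_{i0}²)`. -/
def dtot {s : ℕ} (d0 : Fin s → ℝ) : ℝ := Real.sqrt (∑ i, d0 i ^ 2)

/-- Condition number `κ = (maxᵢ d_{i0}) / (minᵢ d_{i0})`. -/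
def kappa {s : ℕ} (d0 : Fin s → ℝ) : ℝ := (⨆ i, d0 i) / (⨅ i, d0 i)

/-- The observation `y = 𝒜(ℋ(h₀,x₀)) + e`. -/
def yvec {K N L s : ℕ} (b : Fin L → Fin K → ℂ) (a : Fin s → Fin L → Fin N → ℂ)
    (h0 : Fin s → Fin K → ℂ) (x0 : Fin s → Fin N → ℂ) (e : Fin L → ℂ) : Fin L → ℂ :=
  fun l => calA b a (Hmap h0 x0) l + e l

/-- `F(h,x) = ‖𝒜(ℋ(h,x)) − y‖²`. -/
def Fobj {K N L s : ℕ} (b : Fin L → Fin K → ℂ) (a : Fin s → Fin L → Fin N → ℂ)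
    (h0 : Fin s → Fin K → ℂ) (x0 : Fin s → Fin N → ℂ) (e : Fin L → ℂ)
    (h : Fin s → Fin K → ℂ) (x : Fin s → Fin N → ℂ) : ℝ :=
  vnormSq (fun l => calA b a (Hmap h x) l - yvec b a h0 x0 e l)

def G0 (z : ℝ) : ℝ := max (z - 1) 0 ^ 2

def G0' (z : ℝ) : ℝ := 2 * max (z - 1) 0

/-- The `i`-th regularizer `Gᵢ(hᵢ,xᵢ)` (including the factor `ρ`). -/
def Gi {K N L : ℕ} (b : Fin L → Fin K → ℂ) (ρ μ di : ℝ)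
    (hi : Fin K → ℂ) (xi : Fin N → ℂ) : ℝ :=
  ρ * (G0 (vnormSq hi / (2 * di)) + G0 (vnormSq xi / (2 * di))
    + ∑ l, G0 ((L : ℝ) * ‖vinner (b l) hi‖ ^ 2 / (8 * di * μ ^ 2)))

/-- The regularizer `G(h,x) = Σᵢ Gᵢ(hᵢ,xᵢ)`. -/
def Greg {K N L s : ℕ} (b : Fin L → Fin K → ℂ) (ρ μ : ℝ) (dd : Fin s → ℝ)
    (h : Fin s → Fin K → ℂ) (x : Fin s → Fin N → ℂ) : ℝ :=
  ∑ i, Gi b ρ μ (dd i) (h i) (x i)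

/-- `F̃ = F + G`. -/
def Ftil {K N L s : ℕ} (b : Fin L → Fin K → ℂ) (a : Fin s → Fin L → Fin N → ℂ)
    (h0 : Fin s → Fin K → ℂ) (x0 : Fin s → Fin N → ℂ) (e : Fin L → ℂ)
    (ρ μ : ℝ) (dd : Fin s → ℝ)
    (h : Fin s → Fin K → ℂ) (x : Fin s → Fin N → ℂ) : ℝ :=
  Fobj b a h0 x0 e h x + Greg b ρ μ dd h x

/-- The residual `𝒜(ℋ(h,x)) − y`. -/
def residual {K N L s : ℕ} (b : Fin L → Fin K → ℂ) (a : Fin s → Fin L → Fin N → ℂ)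
    (h0 : Fin s → Fin K → ℂ) (x0 : Fin s → Fin N → ℂ) (e : Fin L → ℂ)
    (h : Fin s → Fin K → ℂ) (x : Fin s → Fin N → ℂ) : Fin L → ℂ :=
  fun l => calA b a (Hmap h x) l - yvec b a h0 x0 e l

/-- Wirtinger gradient `∇F_{hᵢ} = 𝒜ᵢ*(𝒜(ℋ(h,x)) − y) xᵢ`. -/
def gradFh {K N L s : ℕ} (b : Fin L → Fin K → ℂ) (a : Fin s → Fin L → Fin N → ℂ)
    (h0 : Fin s → Fin K → ℂ) (x0 : Fin s → Fin N → ℂ) (e : Fin L → ℂ)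
    (h : Fin s → Fin K → ℂ) (x : Fin s → Fin N → ℂ) (i : Fin s) : Fin K → ℂ :=
  (calAdj b (a i) (residual b a h0 x0 e h x)).mulVec (x i)

/-- Wirtinger gradient `∇F_{xᵢ} = (𝒜ᵢ*(𝒜(ℋ(h,x)) − y))* hᵢ`. -/
def gradFx {K N L s : ℕ} (b : Fin L → Fin K → ℂ) (a : Fin s → Fin L → Fin N → ℂ)
    (h0 : Fin s → Fin K → ℂ) (x0 : Fin s → Fin N → ℂ) (e : Fin L → ℂ)
    (h : Fin s → Fin K → ℂ) (x : Fin s → Fin N → ℂ) (i : Fin s) : Fin N → ℂ :=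
  (calAdj b (a i) (residual b a h0 x0 e h x)).conjTranspose.mulVec (h i)

/-- Wirtinger gradient `∇G_{hᵢ}`. -/
def gradGh {K L s : ℕ} (b : Fin L → Fin K → ℂ) (ρ μ : ℝ) (dd : Fin s → ℝ)
    (h : Fin s → Fin K → ℂ) (i : Fin s) : Fin K → ℂ :=
  fun k => ((ρ / (2 * dd i) : ℝ) : ℂ) *
    (((G0' (vnormSq (h i) / (2 * dd i)) : ℝ) : ℂ) * h i k
      + (((L : ℝ) / (4 * μ ^ 2) : ℝ) : ℂ) *
        ∑ l, ((G0' ((L : ℝ) * ‖vinner (b l) (h i)‖ ^ 2 / (8 * dd i * μ ^ 2)) : ℝ) : ℂ)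
          * (vinner (b l) (h i) * b l k))

/-- Wirtinger gradient `∇G_{xᵢ}`. -/
def gradGx {N s : ℕ} (ρ : ℝ) (dd : Fin s → ℝ)
    (x : Fin s → Fin N → ℂ) (i : Fin s) : Fin N → ℂ :=
  fun j => ((ρ / (2 * dd i) : ℝ) : ℂ) * (((G0' (vnormSq (x i) / (2 * dd i)) : ℝ) : ℂ) * x i j)

/-- `∇F̃_{hᵢ} = ∇F_{hᵢ} + ∇G_{hᵢ}`. -/
def gradH {K N L s : ℕ} (b : Fin L → Fin K → ℂ) (a : Fin s → Fin L → Fin N → ℂ)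
    (h0 : Fin s → Fin K → ℂ) (x0 : Fin s → Fin N → ℂ) (e : Fin L → ℂ)
    (ρ μ : ℝ) (dd : Fin s → ℝ)
    (h : Fin s → Fin K → ℂ) (x : Fin s → Fin N → ℂ) (i : Fin s) : Fin K → ℂ :=
  fun k => gradFh b a h0 x0 e h x i k + gradGh b ρ μ dd h i k

/-- `∇F̃_{xᵢ} = ∇F_{xᵢ} + ∇G_{xᵢ}`. -/
def gradX {K N L s : ℕ} (b : Fin L → Fin K → ℂ) (a : Fin s → Fin L → Fin N → ℂ)
    (h0 : Fin s → Fin K → ℂ) (x0 : Fin s → Fin N → ℂ) (e : Fin L → ℂ)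
    (ρ μ : ℝ) (dd : Fin s → ℝ)
    (h : Fin s → Fin K → ℂ) (x : Fin s → Fin N → ℂ) (i : Fin s) : Fin N → ℂ :=
  fun j => gradFx b a h0 x0 e h x i j + gradGx ρ dd x i j

/-- `‖∇F̃(h,x)‖²` (squared norm of the stacked Wirtinger gradient). -/
def gradNormSq {K N L s : ℕ} (b : Fin L → Fin K → ℂ) (a : Fin s → Fin L → Fin N → ℂ)
    (h0 : Fin s → Fin K → ℂ) (x0 : Fin s → Fin N → ℂ) (e : Fin L → ℂ)
    (ρ μ : ℝ) (dd : Fin s → ℝ)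
    (h : Fin s → Fin K → ℂ) (x : Fin s → Fin N → ℂ) : ℝ :=
  ∑ i, vnormSq (gradH b a h0 x0 e ρ μ dd h x i) + ∑ i, vnormSq (gradX b a h0 x0 e ρ μ dd h x i)

/-- `‖∇F̃(h',x') − ∇F̃(h,x)‖²`. -/
def gradDiffNormSq {K N L s : ℕ} (b : Fin L → Fin K → ℂ) (a : Fin s → Fin L → Fin N → ℂ)
    (h0 : Fin s → Fin K → ℂ) (x0 : Fin s → Fin N → ℂ) (e : Fin L → ℂ)
    (ρ μ : ℝ) (dd : Fin s → ℝ)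
    (h : Fin s → Fin K → ℂ) (x : Fin s → Fin N → ℂ)
    (h' : Fin s → Fin K → ℂ) (x' : Fin s → Fin N → ℂ) : ℝ :=
  ∑ i, vnormSq (fun k => gradH b a h0 x0 e ρ μ dd h' x' i k - gradH b a h0 x0 e ρ μ dd h x i k)
  + ∑ i, vnormSq (fun j => gradX b a h0 x0 e ρ μ dd h' x' i j - gradX b a h0 x0 e ρ μ dd h x i j)

/-- Membership in `𝒩_d`. -/
def inNd {K N s : ℕ} (d0 : Fin s → ℝ)
    (h : Fin s → Fin K → ℂ) (x : Fin s → Fin N → ℂ) : Prop :=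
  ∀ i, vnorm (h i) ≤ 2 * Real.sqrt (d0 i) ∧ vnorm (x i) ≤ 2 * Real.sqrt (d0 i)

/-- Membership in `𝒩_μ`. -/
def inNmu {K L s : ℕ} (b : Fin L → Fin K → ℂ) (d0 : Fin s → ℝ) (μ : ℝ)
    (h : Fin s → Fin K → ℂ) : Prop :=
  ∀ i, ∀ l, Real.sqrt L * ‖vinner (b l) (h i)‖ ≤ 4 * Real.sqrt (d0 i) * μ

/-- `δᵢ(hᵢ,xᵢ) = ‖hᵢxᵢ* − h_{i0}x_{i0}*‖_F / d_{i0}`. -/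
def deltaI {K N : ℕ} (h0i : Fin K → ℂ) (x0i : Fin N → ℂ) (d0i : ℝ)
    (hi : Fin K → ℂ) (xi : Fin N → ℂ) : ℝ :=
  frob (rankOne hi xi - rankOne h0i x0i) / d0i

/-- Membership in `𝒩_ε`. -/
def inNeps {K N s : ℕ} (h0 : Fin s → Fin K → ℂ) (x0 : Fin s → Fin N → ℂ)
    (d0 : Fin s → ℝ) (ε : ℝ)
    (h : Fin s → Fin K → ℂ) (x : Fin s → Fin N → ℂ) : Prop :=
  ∀ i, deltaI (h0 i) (x0 i) (d0 i) (h i) (x i) ≤ ε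

/-- The global relative error `δ(h,x) = ‖ℋ(h,x) − X₀‖_F / d₀`. -/
def deltaTot {K N s : ℕ} (h0 : Fin s → Fin K → ℂ) (x0 : Fin s → Fin N → ℂ)
    (d0 : Fin s → ℝ)
    (h : Fin s → Fin K → ℂ) (x : Fin s → Fin N → ℂ) : ℝ :=
  famFrob (fun i => Hmap h x i - Hmap h0 x0 i) / dtot d0

/-- Membership in `𝒩_F̃`. -/
def inNF {K N L s : ℕ} (b : Fin L → Fin K → ℂ) (a : Fin s → Fin L → Fin N → ℂ)
    (h0 : Fin s → Fin K → ℂ) (x0 : Fin s → Fin N → ℂ) (e : Fin L → ℂ)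
    (d0 : Fin s → ℝ) (ρ μ : ℝ) (dd : Fin s → ℝ) (ε : ℝ)
    (h : Fin s → Fin K → ℂ) (x : Fin s → Fin N → ℂ) : Prop :=
  Ftil b a h0 x0 e ρ μ dd h x ≤ ε ^ 2 * dtot d0 ^ 2 / (3 * (s : ℝ) * kappa d0 ^ 2) + vnormSq e

/-- The Local Restricted Isometry Property on `𝒩_d ∩ 𝒩_μ ∩ 𝒩_ε`. -/
def LocalRIP {K N L s : ℕ} (b : Fin L → Fin K → ℂ) (a : Fin s → Fin L → Fin N → ℂ)
    (h0 : Fin s → Fin K → ℂ) (x0 : Fin s → Fin N → ℂ)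
    (d0 : Fin s → ℝ) (μ ε : ℝ) : Prop :=
  ∀ (h : Fin s → Fin K → ℂ) (x : Fin s → Fin N → ℂ),
    inNd d0 h x → inNmu b d0 μ h → inNeps h0 x0 d0 ε h x →
      (2 / 3) * famFrobSq (fun i => Hmap h x i - Hmap h0 x0 i)
          ≤ vnormSq (calA b a fun i => Hmap h x i - Hmap h0 x0 i)
      ∧ vnormSq (calA b a fun i => Hmap h x i - Hmap h0 x0 i)
          ≤ (3 / 2) * famFrobSq (fun i => Hmap h x i - Hmap h0 x0 i)

/-- `α_{i1} = ⟨h_{i0}, hᵢ⟩ / d_{i0}`. -/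
def alpha1 {K s : ℕ} (h0 : Fin s → Fin K → ℂ) (d0 : Fin s → ℝ)
    (h : Fin s → Fin K → ℂ) (i : Fin s) : ℂ :=
  vinner (h0 i) (h i) / ((d0 i : ℝ) : ℂ)

/-- `α_{i2} = ⟨x_{i0}, xᵢ⟩ / d_{i0}`. -/
def alpha2 {N s : ℕ} (x0 : Fin s → Fin N → ℂ) (d0 : Fin s → ℝ)
    (x : Fin s → Fin N → ℂ) (i : Fin s) : ℂ :=
  vinner (x0 i) (x i) / ((d0 i : ℝ) : ℂ)

/-- `δ₀ = δ/10`. -/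
def delta0 {K N s : ℕ} (h0 : Fin s → Fin K → ℂ) (x0 : Fin s → Fin N → ℂ)
    (d0 : Fin s → ℝ) (h : Fin s → Fin K → ℂ) (x : Fin s → Fin N → ℂ) : ℝ :=
  deltaTot h0 x0 d0 h x / 10

/-- `αᵢ = (1−δ₀)α_{i1}` if `‖hᵢ‖ ≥ ‖xᵢ‖`, else `1/((1−δ₀) conj(α_{i2}))`. -/
def alphaC {K N s : ℕ} (h0 : Fin s → Fin K → ℂ) (x0 : Fin s → Fin N → ℂ)
    (d0 : Fin s → ℝ) (h : Fin s → Fin K → ℂ) (x : Fin s → Fin N → ℂ) (i : Fin s) : ℂ :=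
  if vnorm (x i) ≤ vnorm (h i)
  then ((1 - delta0 h0 x0 d0 h x : ℝ) : ℂ) * alpha1 h0 d0 h i
  else 1 / (((1 - delta0 h0 x0 d0 h x : ℝ) : ℂ) * conj (alpha2 x0 d0 x i))

/-- `Δhᵢ = hᵢ − αᵢ h_{i0}`. -/
def dh {K N s : ℕ} (h0 : Fin s → Fin K → ℂ) (x0 : Fin s → Fin N → ℂ)
    (d0 : Fin s → ℝ) (h : Fin s → Fin K → ℂ) (x : Fin s → Fin N → ℂ) (i : Fin s) :
    Fin K → ℂ :=
  fun k => h i k - alphaC h0 x0 d0 h x i * h0 i k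

/-- `Δxᵢ = xᵢ − conj(αᵢ)⁻¹ x_{i0}`. -/
def dx {K N s : ℕ} (h0 : Fin s → Fin K → ℂ) (x0 : Fin s → Fin N → ℂ)
    (d0 : Fin s → ℝ) (h : Fin s → Fin K → ℂ) (x : Fin s → Fin N → ℂ) (i : Fin s) :
    Fin N → ℂ :=
  fun j => x i j - (conj (alphaC h0 x0 d0 h x i))⁻¹ * x0 i j

/-- `σ²_max(h,x) = maxₗ Σᵢ |bₗ*hᵢ|² ‖xᵢ‖²`. -/
def sigmaMaxSq {K N L s : ℕ} (b : Fin L → Fin K → ℂ)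
    (h : Fin s → Fin K → ℂ) (x : Fin s → Fin N → ℂ) : ℝ :=
  ⨆ l : Fin L, ∑ i, ‖vinner (b l) (h i)‖ ^ 2 * vnormSq (x i)

/-- The rank-one bound (Lemma: `𝒜` on block-diagonal matrices with rank-1 blocks). -/
def RankOneBound {K N L s : ℕ} (b : Fin L → Fin K → ℂ)
    (a : Fin s → Fin L → Fin N → ℂ) : Prop :=
  ∀ (h : Fin s → Fin K → ℂ) (x : Fin s → Fin N → ℂ),
    vnormSq (calA b a (Hmap h x)) ≤
      4 / 3 * famFrobSq (Hmap h x)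
      + 2 * Real.sqrt (2 * (s : ℝ) * famFrobSq (Hmap h x) * sigmaMaxSq b h x
          * ((K : ℝ) + N) * Real.log L)
      + 8 * (s : ℝ) * sigmaMaxSq b h x * ((K : ℝ) + N) * Real.log L

/-- The subspace `Tᵢ = {h_{i0} v* + u x_{i0}*}`. -/
def Tspace {K N : ℕ} (h0i : Fin K → ℂ) (x0i : Fin N → ℂ) :
    Set (Matrix (Fin K) (Fin N) ℂ) :=
  {Z | ∃ (u : Fin K → ℂ) (v : Fin N → ℂ), Z = rankOne h0i v + rankOne u x0i}

/-- `P` is the orthogonal projection onto `Tᵢ` w.r.t. the Frobenius inner product. -/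
def IsFrobProj {K N : ℕ} (h0i : Fin K → ℂ) (x0i : Fin N → ℂ)
    (P : Matrix (Fin K) (Fin N) ℂ → Matrix (Fin K) (Fin N) ℂ) : Prop :=
  ∀ Z, P Z ∈ Tspace h0i x0i ∧ ∀ W ∈ Tspace h0i x0i, finner W (Z - P Z) = 0

/-- Operator norm of `𝒜ᵢ` from `(ℂ^{K×N}, ‖·‖_F)` to `(ℂ^L, ‖·‖)`. -/
def calAiOpNorm {K N L : ℕ} (b : Fin L → Fin K → ℂ) (a : Fin L → Fin N → ℂ) : ℝ :=
  sSup {r : ℝ | ∃ Z : Matrix (Fin K) (Fin N) ℂ, frob Z ≤ 1 ∧ r = vnorm (calAi b a Z)}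

/-- Operator norm of `𝒜` from block-diagonal matrices with `‖·‖_F` to `ℂ^L`. -/
def calAOpNorm {K N L s : ℕ} (b : Fin L → Fin K → ℂ)
    (a : Fin s → Fin L → Fin N → ℂ) : ℝ :=
  sSup {r : ℝ | ∃ Z : Fin s → Matrix (Fin K) (Fin N) ℂ, famFrob Z ≤ 1 ∧ r = vnorm (calA b a Z)}

/-- Norm of a stacked vector in `ℂ^{ns}`. -/
def stackNorm {n s : ℕ} (u : Fin s → Fin n → ℂ) : ℝ := Real.sqrt (∑ i, vnormSq (u i))

/-- Norm of a point `z = (h,x) ∈ ℂ^{s(K+N)}`. -/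
def pairNorm {K N s : ℕ} (u : Fin s → Fin K → ℂ) (v : Fin s → Fin N → ℂ) : ℝ :=
  Real.sqrt (∑ i, vnormSq (u i) + ∑ i, vnormSq (v i))

/-- `z + t • w` componentwise, `t` real. -/
def shiftV {n s : ℕ} (u w : Fin s → Fin n → ℂ) (t : ℝ) : Fin s → Fin n → ℂ :=
  fun i k => u i k + (t : ℂ) * w i k

/-- `σ_max(h) = maxₗ √(Σᵢ |bₗ*hᵢ|²)` (unit `xᵢ`'s). -/
def sigmaMaxU {K L s : ℕ} (b : Fin L → Fin K → ℂ) (h : Fin s → Fin K → ℂ) : ℝ :=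
  ⨆ l, Real.sqrt (∑ i, ‖vinner (b l) (h i)‖ ^ 2)

end RGD

/-!
Parts (i) and (ii) are the triangle inequality for the operator norm, (ii) combined with the
optimality of `d ĥ x̂*` against the rank-one competitor `h₀ x₀*`. For (iii), apply
`W = d ĥ x̂* − h₀ x₀*` to `x₀`: `W x₀ = c ĥ − d₀ h₀` for some scalar `c`, so
`‖W‖ √d₀ ≥ d₀ · dist(h₀, ℂ ĥ)`. The sine of the angle between two lines is symmetric,
`‖h₀‖ · dist(ĥ, ℂ h₀) = ‖ĥ‖ · dist(h₀, ℂ ĥ)`, which turns this into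
`d₀ ‖(I − h₀h₀*/d₀) ĥ‖ ≤ ‖W‖ ≤ 2ξ d₀`.
-/

open scoped InnerProductSpace

section InnerProductSpace

variable {𝕜 E F : Type*} [RCLike 𝕜] [NormedAddCommGroup E] [InnerProductSpace 𝕜 E]
  [NormedAddCommGroup F] [InnerProductSpace 𝕜 F]

theorem Submodule.norm_sub_starProjection_le (U : Submodule 𝕜 E) [U.HasOrthogonalProjection]
    (y : E) {w : E} (hw : w ∈ U) : ‖y - U.starProjection y‖ ≤ ‖y - w‖ := by
  rw [starProjection_minimal]
  exact ciInf_le ⟨0, Set.forall_mem_range.mpr fun _ => norm_nonneg _⟩ (⟨w, hw⟩ : U)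

theorem sq_norm_mul_sq_norm_sub_starProjection_singleton (h u : E) :
    ‖h‖ ^ 2 * ‖u - (𝕜 ∙ h).starProjection u‖ ^ 2 = ‖h‖ ^ 2 * ‖u‖ ^ 2 - ‖⟪h, u⟫_𝕜‖ ^ 2 := by
  rcases eq_or_ne h 0 with rfl | hh
  · simp
  have hpyth := (𝕜 ∙ h).norm_sq_eq_add_norm_sq_starProjection u
  rw [Submodule.starProjection_orthogonal', sub_apply, one_apply_eq_self] at hpyth
  rw [hpyth, Submodule.starProjection_singleton, norm_smul, norm_div, RCLike.norm_ofReal,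
    abs_of_nonneg (by positivity)]
  have : ‖h‖ ≠ 0 := norm_ne_zero_iff.mpr hh
  field_simp
  ring

theorem norm_mul_norm_sub_starProjection_singleton_comm (h u : E) :
    ‖h‖ * ‖u - (𝕜 ∙ h).starProjection u‖ = ‖u‖ * ‖h - (𝕜 ∙ u).starProjection h‖ := by
  rw [← sq_eq_sq₀ (by positivity) (by positivity), mul_pow, mul_pow,
    sq_norm_mul_sq_norm_sub_starProjection_singleton,
    sq_norm_mul_sq_norm_sub_starProjection_singleton, ← norm_inner_symm]
  ring

theorem norm_mul_norm_mul_norm_sub_starProjection_le_norm_rankOne_sub (u h : E) (y x : F) :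
    ‖x‖ * ‖h‖ * ‖u - (𝕜 ∙ h).starProjection u‖ ≤
      ‖u‖ * ‖InnerProductSpace.rankOne 𝕜 u y - InnerProductSpace.rankOne 𝕜 h x‖ := by
  set T := InnerProductSpace.rankOne 𝕜 u y - InnerProductSpace.rankOne 𝕜 h x
  have hTx : T x = ⟪y, x⟫_𝕜 • u - ((‖x‖ ^ 2 : ℝ) : 𝕜) • h := by
    simp [T, inner_self_eq_norm_sq_to_K]
  have hdist : ‖x‖ ^ 2 * ‖h - (𝕜 ∙ u).starProjection h‖ ≤ ‖T‖ * ‖x‖ :=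
    calc ‖x‖ ^ 2 * ‖h - (𝕜 ∙ u).starProjection h‖
        = ‖((‖x‖ ^ 2 : ℝ) : 𝕜) • h - (𝕜 ∙ u).starProjection (((‖x‖ ^ 2 : ℝ) : 𝕜) • h)‖ := by
          rw [map_smul, ← smul_sub, norm_smul, RCLike.norm_ofReal, abs_of_nonneg (by positivity)]
      _ ≤ ‖((‖x‖ ^ 2 : ℝ) : 𝕜) • h - ⟪y, x⟫_𝕜 • u‖ :=
          (𝕜 ∙ u).norm_sub_starProjection_le _
            (Submodule.smul_mem _ _ (Submodule.mem_span_singleton_self u))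
      _ = ‖T x‖ := by rw [hTx, norm_sub_rev]
      _ ≤ ‖T‖ * ‖x‖ := T.le_opNorm x
  rcases (norm_nonneg x).eq_or_lt with hx | hx
  · rw [← hx, zero_mul, zero_mul]
    positivity
  refine le_of_mul_le_mul_left ?_ hx
  calc ‖x‖ * (‖x‖ * ‖h‖ * ‖u - (𝕜 ∙ h).starProjection u‖)
      = ‖u‖ * (‖x‖ ^ 2 * ‖h - (𝕜 ∙ u).starProjection h‖) := by
        rw [mul_left_comm _ (‖x‖ ^ 2),
          ← norm_mul_norm_sub_starProjection_singleton_comm (𝕜 := 𝕜)]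
        ring
    _ ≤ ‖u‖ * (‖T‖ * ‖x‖) := by gcongr
    _ = ‖x‖ * (‖u‖ * ‖T‖) := by ring

end InnerProductSpace

namespace RGD

theorem vnorm_eq_norm {n : ℕ} (v : Fin n → ℂ) :
    vnorm v = ‖(WithLp.toLp 2 v : EuclideanSpace ℂ (Fin n))‖ := by
  rw [EuclideanSpace.norm_eq]
  rfl

theorem vinner_eq_inner {n : ℕ} (u v : Fin n → ℂ) :
    vinner u v = ⟪(WithLp.toLp 2 u : EuclideanSpace ℂ (Fin n)), WithLp.toLp 2 v⟫_ℂ := by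
  simp [vinner, PiLp.inner_apply, mul_comm]

theorem rankOne_eq_vecMulVec {K N : ℕ} (u : Fin K → ℂ) (v : Fin N → ℂ) :
    rankOne u v = Matrix.vecMulVec u (star v) := by
  ext k j
  simp [rankOne, Matrix.vecMulVec_apply]

theorem rank_rankOne_le_one {K N : ℕ} (u : Fin K → ℂ) (v : Fin N → ℂ) :
    (rankOne u v).rank ≤ 1 := by
  rw [rankOne_eq_vecMulVec]
  exact Matrix.rank_vecMulVec_le _ _

theorem real_smul_rankOne {K N : ℕ} (r : ℝ) (u : Fin K → ℂ) (v : Fin N → ℂ) :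
    r • rankOne u v = rankOne u ((r : ℂ) • v) := by
  ext k j
  simp [rankOne, mul_left_comm]

section L2OpNorm

open scoped Matrix.Norms.L2Operator

theorem opNorm_eq_l2_opNorm {K N : ℕ} (Z : Matrix (Fin K) (Fin N) ℂ) : opNorm Z = ‖Z‖ := by
  rw [Matrix.l2_opNorm_def, ← ContinuousLinearMap.sSup_unitClosedBall_eq_norm, opNorm]
  congr 1
  ext r
  constructor
  · rintro ⟨v, hv, rfl⟩
    exact ⟨WithLp.toLp 2 v, by simpa [vnorm_eq_norm] using hv, by simp [vnorm_eq_norm]⟩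
  · rintro ⟨x, hx, rfl⟩
    exact ⟨x.ofLp, by simpa [vnorm_eq_norm] using hx,
      by simp [vnorm_eq_norm, Matrix.toLpLin_apply]⟩

theorem toEuclideanLin_trans_toContinuousLinearMap_rankOne {K N : ℕ}
    (u : Fin K → ℂ) (v : Fin N → ℂ) :
    (Matrix.toEuclideanLin.trans LinearMap.toContinuousLinearMap) (rankOne u v) =
      InnerProductSpace.rankOne ℂ (WithLp.toLp 2 u : EuclideanSpace ℂ (Fin K))
        (WithLp.toLp 2 v : EuclideanSpace ℂ (Fin N)) := by
  rw [rankOne_eq_vecMulVec, ← InnerProductSpace.symm_toEuclideanLin_rankOne,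
    LinearEquiv.trans_apply, LinearEquiv.apply_symm_apply]
  rfl

theorem opNorm_rankOne {K N : ℕ} (u : Fin K → ℂ) (v : Fin N → ℂ) :
    opNorm (rankOne u v) = vnorm u * vnorm v := by
  rw [opNorm_eq_l2_opNorm, Matrix.l2_opNorm_def, toEuclideanLin_trans_toContinuousLinearMap_rankOne,
    InnerProductSpace.norm_rankOne, vnorm_eq_norm, vnorm_eq_norm]

theorem abs_opNorm_sub_opNorm_le {K N : ℕ} (A B : Matrix (Fin K) (Fin N) ℂ) :
    |opNorm A - opNorm B| ≤ opNorm (A - B) := by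
  simpa only [opNorm_eq_l2_opNorm] using abs_norm_sub_norm_le A B

theorem opNorm_sub_le_opNorm_sub_add_opNorm_sub {K N : ℕ} (A B C : Matrix (Fin K) (Fin N) ℂ) :
    opNorm (A - C) ≤ opNorm (B - A) + opNorm (B - C) := by
  simp only [opNorm_eq_l2_opNorm]
  rw [norm_sub_rev B A]
  exact norm_sub_le_norm_sub_add_norm_sub A B C

theorem vnorm_mul_vnorm_mul_vnorm_sub_proj_le_opNorm_rankOne_sub {K N : ℕ}
    (u h : Fin K → ℂ) (y x : Fin N → ℂ) :
    vnorm x * vnorm h * vnorm (fun k => u k - vinner h u / ((vnorm h ^ 2 : ℝ) : ℂ) * h k) ≤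
      vnorm u * opNorm (rankOne u y - rankOne h x) := by
  have hproj : vnorm (fun k => u k - vinner h u / ((vnorm h ^ 2 : ℝ) : ℂ) * h k) =
      ‖(WithLp.toLp 2 u : EuclideanSpace ℂ (Fin K)) -
        (ℂ ∙ WithLp.toLp 2 h).starProjection (WithLp.toLp 2 u)‖ := by
    rw [Submodule.starProjection_singleton, ← vinner_eq_inner, ← vnorm_eq_norm h, vnorm_eq_norm]
    rfl
  rw [hproj, vnorm_eq_norm x, vnorm_eq_norm h, vnorm_eq_norm u, opNorm_eq_l2_opNorm,
    Matrix.l2_opNorm_def, map_sub, toEuclideanLin_trans_toContinuousLinearMap_rankOne,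
    toEuclideanLin_trans_toContinuousLinearMap_rankOne]
  exact norm_mul_norm_mul_norm_sub_starProjection_le_norm_rankOne_sub _ _ _ _

end L2OpNorm

theorem statement19_general
    {K N : ℕ}
    (h0 : Fin K → ℂ) (x0 : Fin N → ℂ) (d0 : ℝ) (hd0 : 0 < d0)
    (hh0 : vnorm h0 = Real.sqrt d0) (hx0 : vnorm x0 = Real.sqrt d0)
    (M : Matrix (Fin K) (Fin N) ℂ) (ξ : ℝ)
    (hM : opNorm (M - rankOne h0 x0) ≤ ξ * d0)
    (hh : Fin K → ℂ) (xh : Fin N → ℂ)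
    (hhu : vnorm hh = 1)
    (hbest : ∀ Z : Matrix (Fin K) (Fin N) ℂ, Z.rank ≤ 1 →
      opNorm (M - opNorm M • rankOne hh xh) ≤ opNorm (M - Z)) :
    |opNorm M - d0| ≤ ξ * d0
    ∧ opNorm (opNorm M • rankOne hh xh - rankOne h0 x0) ≤ 2 * ξ * d0
    ∧ vnorm (fun k => hh k - vinner h0 hh / ((d0 : ℝ) : ℂ) * h0 k) ≤ 2 * ξ := by
  have hX0 : opNorm (rankOne h0 x0) = d0 := by
    rw [opNorm_rankOne, hh0, hx0, Real.mul_self_sqrt hd0.le]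
  have hclose : opNorm (opNorm M • rankOne hh xh - rankOne h0 x0) ≤ 2 * ξ * d0 := by
    have hoptimal := hbest _ (rank_rankOne_le_one h0 x0)
    linarith [opNorm_sub_le_opNorm_sub_add_opNorm_sub
      (opNorm M • rankOne hh xh) M (rankOne h0 x0)]
  refine ⟨by simpa only [hX0] using (abs_opNorm_sub_opNorm_le M (rankOne h0 x0)).trans hM,
    hclose, ?_⟩
  have hsine :=
    vnorm_mul_vnorm_mul_vnorm_sub_proj_le_opNorm_rankOne_sub hh h0 ((opNorm M : ℂ) • xh) x0
  rw [← real_smul_rankOne, hh0, hx0, hhu, Real.mul_self_sqrt hd0.le, Real.sq_sqrt hd0.le,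
    one_mul] at hsine
  exact le_of_mul_le_mul_left (by linarith) hd0

/-- spectral perturbation for the best rank-one approximation. -/
theorem statement19
    {K N : ℕ} (hK : 0 < K) (hN : 0 < N)
    (h0 : Fin K → ℂ) (x0 : Fin N → ℂ) (d0 : ℝ) (hd0 : 0 < d0)
    (hh0 : vnorm h0 = Real.sqrt d0) (hx0 : vnorm x0 = Real.sqrt d0)
    (M : Matrix (Fin K) (Fin N) ℂ) (ξ : ℝ) (hξ0 : 0 ≤ ξ) (hξ1 : ξ ≤ 1 / 10)
    (hM : opNorm (M - rankOne h0 x0) ≤ ξ * d0)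
    (hh : Fin K → ℂ) (xh : Fin N → ℂ)
    (hhu : vnorm hh = 1) (xhu : vnorm xh = 1)
    (hbest : ∀ Z : Matrix (Fin K) (Fin N) ℂ, Z.rank ≤ 1 →
      opNorm (M - opNorm M • rankOne hh xh) ≤ opNorm (M - Z)) :
    |opNorm M - d0| ≤ ξ * d0
    ∧ opNorm (opNorm M • rankOne hh xh - rankOne h0 x0) ≤ 2 * ξ * d0
    ∧ vnorm (fun k => hh k - vinner h0 hh / ((d0 : ℝ) : ℂ) * h0 k) ≤ 2 * ξ :=
  statement19_general h0 x0 d0 hd0 hh0 hx0 M ξ hM hh xh hhu hbest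

end RGD
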